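/- arXiv:1203.0367 — 3 statements merged into one kernel-verified Lean document; each statement's English description precedes it below -/
import Mathlib

section
/- Let g and h be Lie 2-algebras over a field k and ĝ an extension of g by h. Let σ and σ' be two splittings, with induced morphisms f and f' from g to DER(h) (as constructed from a splitting). Write b₀ = σ₀ − σ₀': g₀ → h₀ and b₁ = σ₁ − σ₁': g₁ → h₁ (which take values in h = ker p). Then f and f' are equivalent morphisms from g to DER(h), with equivalence data (b₀, b₁, b₂ = 0); in particular: μ₀(x) − μ₀'(x) = ad_{b₀(x)}; φ'(a) − φ(a) = b₀(d_g a) − d_h b₁(a); μ₁(a) − μ₁'(a) = ad_{b₁(a)}; (μ₂ − μ₂')(x,y) = l_{μ₀'(x)}(b₀(y),·) − l_{μ₀'(y)}(b₀(x),·) + l₃^h(b₀(x),b₀(y),·); (ω' − ω)(x,y) = μ₀'(x)b₀(y) − μ₀'(y)b₀(x) + [b₀(x),b₀(y)]_h − b₀([x,y]_g); (ν' − ν)(x,a) = μ₀'(x)(b₁(a)) − μ₁'(a)(b₀(x)) − b₁([x,a]_g) + [b₀(x),b₁(a)]_h; and (θ' − θ)(x,y,z) = μ₂'(x,y)b₀(z)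 + l_{μ₀'(x)}(b₀(y),b₀(z)) + c.p. − b₁(l₃^g(x,y,z)) + l₃^h(b₀(x),b₀(y),b₀(z)). -/
/-- A Lie 2-algebra: a 2-term complex `d : g1 → g0` with a skew-symmetric bracket
(`br0` on degree 0, `br1` mixing degrees, with `[a,x] := -[x,a]`) and an alternating
Jacobiator `l3`, satisfying the Lie 2-algebra axioms. -/
structure LieTwo (k : Type*) (g0 : Type*) (g1 : Type*) [Field k]
    [AddCommGroup g0] [Module k g0] [AddCommGroup g1] [Module k g1] where
  d : g1 →ₗ[k] g0
  br0 : g0 →ₗ[k] g0 →ₗ[k] g0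
  br1 : g0 →ₗ[k] g1 →ₗ[k] g1
  l3 : g0 →ₗ[k] g0 →ₗ[k] g0 →ₗ[k] g1
  br0_skew : ∀ x y, br0 x y = - br0 y x
  l3_skew12 : ∀ x y z, l3 x y z = - l3 y x z
  l3_skew23 : ∀ x y z, l3 x y z = - l3 x z y
  d_br1 : ∀ x a, d (br1 x a) = br0 x (d a)
  br1_dd : ∀ a b, br1 (d a) b = - br1 (d b) a
  jac0 : ∀ x y z, br0 x (br0 y z) + br0 y (br0 z x) + br0 z (br0 x y) = d (l3 x y z)
  jac1 : ∀ x y a, br1 x (br1 y a) - br1 y (br1 x a) - br1 (br0 x y) a = l3 x y (d a)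
  jacobiator : ∀ x y z t,
    l3 (br0 x y) z t + l3 (br0 y z) t x + l3 (br0 z t) x y + l3 (br0 t x) y z
      = - br1 t (l3 x y z) - br1 x (l3 y z t) - br1 y (l3 z t x) - br1 z (l3 t x y)

/-- A strict morphism of Lie 2-algebras: a chain map preserving the brackets and
`l3` on the nose. -/
structure StrictMor {k a0 a1 b0 b1 : Type*} [Field k]
    [AddCommGroup a0] [Module k a0] [AddCommGroup a1] [Module k a1]
    [AddCommGroup b0] [Module k b0] [AddCommGroup b1] [Module k b1]
    (A : LieTwo k a0 a1) (B : LieTwo k b0 b1) where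
  m0 : a0 →ₗ[k] b0
  m1 : a1 →ₗ[k] b1
  comm_d : ∀ a, m0 (A.d a) = B.d (m1 a)
  map_br0 : ∀ x y, m0 (A.br0 x y) = B.br0 (m0 x) (m0 y)
  map_br1 : ∀ x a, m1 (A.br1 x a) = B.br1 (m0 x) (m1 a)
  map_l3 : ∀ x y z, m1 (A.l3 x y z) = B.l3 (m0 x) (m0 y) (m0 z)

/-- A (possibly non-strict) morphism of Lie 2-algebras `F = (F0, F1, F2)`. -/
structure Mor2 {k a0 a1 b0 b1 : Type*} [Field k]
    [AddCommGroup a0] [Module k a0] [AddCommGroup a1] [Module k a1]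
    [AddCommGroup b0] [Module k b0] [AddCommGroup b1] [Module k b1]
    (A : LieTwo k a0 a1) (B : LieTwo k b0 b1) where
  F0 : a0 →ₗ[k] b0
  F1 : a1 →ₗ[k] b1
  F2 : a0 →ₗ[k] a0 →ₗ[k] b1
  F2_skew : ∀ x y, F2 x y = - F2 y x
  comm_d : ∀ a, B.d (F1 a) = F0 (A.d a)
  mor_br0 : ∀ x y, F0 (A.br0 x y) - B.br0 (F0 x) (F0 y) = B.d (F2 x y)
  mor_br1 : ∀ x a, F1 (A.br1 x a) - B.br1 (F0 x) (F1 a) = F2 x (A.d a)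
  mor_l3 : ∀ x y z,
    B.br1 (F0 x) (F2 y z) + B.br1 (F0 y) (F2 z x) + B.br1 (F0 z) (F2 x y)
        + B.l3 (F0 x) (F0 y) (F0 z)
      = F2 (A.br0 x y) z + F2 (A.br0 y z) x + F2 (A.br0 z x) y + F1 (A.l3 x y z)

section Defs

variable {k h0 h1 g0 g1 : Type*} [Field k]
  [AddCommGroup h0] [Module k h0] [AddCommGroup h1] [Module k h1]
  [AddCommGroup g0] [Module k g0] [AddCommGroup g1] [Module k g1]

/-- The triple `(A0, A1, lA)` is a degree-0 derivation of the Lie 2-algebra `W`. -/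
def IsDer0 (W : LieTwo k h0 h1) (A0 : h0 →ₗ[k] h0) (A1 : h1 →ₗ[k] h1)
    (lA : h0 →ₗ[k] h0 →ₗ[k] h1) : Prop :=
  (∀ m, A0 (W.d m) = W.d (A1 m)) ∧
  (∀ u v, lA u v = - lA v u) ∧
  (∀ u v, A0 (W.br0 u v) - W.br0 (A0 u) v - W.br0 u (A0 v) = W.d (lA u v)) ∧
  (∀ u m, A1 (W.br1 u m) - W.br1 (A0 u) m - W.br1 u (A1 m) = lA u (W.d m)) ∧
  (∀ u v w,
    lA u (W.br0 v w) + W.br1 u (lA v w) + W.l3 (A0 u) v w + W.l3 u (A0 v) w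
        + W.l3 u v (A0 w)
      = A1 (W.l3 u v w) + lA (W.br0 u v) w + lA v (W.br0 u w)
        - W.br1 w (lA u v) + W.br1 v (lA u w))

/-- The data `(f0 = (μ00, μ01, lμ), f1 = (μ1, −φ), f2⁰ = (−μ2, ω), f2¹ = ν, f3 = θ)`
is a morphism from the Lie 2-algebra `G` to the derivation Lie 3-algebra `DER(W)`:
the seven defining equations of a morphism from a Lie 2-algebra to a strict Lie
3-algebra, written out componentwise. -/
def IsMorphToDER (W : LieTwo k h0 h1) (G : LieTwo k g0 g1)
    (μ00 : g0 →ₗ[k] h0 →ₗ[k] h0) (μ01 : g0 →ₗ[k] h1 →ₗ[k] h1)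
    (lμ : g0 →ₗ[k] h0 →ₗ[k] h0 →ₗ[k] h1)
    (μ1 : g1 →ₗ[k] h0 →ₗ[k] h1) (φ : g1 →ₗ[k] h0)
    (μ2 : g0 →ₗ[k] g0 →ₗ[k] h0 →ₗ[k] h1)
    (ω : g0 →ₗ[k] g0 →ₗ[k] h0) (ν : g0 →ₗ[k] g1 →ₗ[k] h1)
    (θ : g0 →ₗ[k] g0 →ₗ[k] g0 →ₗ[k] h1) : Prop :=
  -- (1) d_D ∘ f1 = f0 ∘ d
  (∀ a u, W.d (μ1 a u) - W.br0 (φ a) u = μ00 (G.d a) u) ∧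
  (∀ a m, μ1 a (W.d m) - W.br1 (φ a) m = μ01 (G.d a) m) ∧
  (∀ a u v, μ1 a (W.br0 u v) - W.br1 u (μ1 a v) + W.br1 v (μ1 a u)
      - W.l3 (φ a) u v = lμ (G.d a) u v) ∧
  -- (2) f0 l2(x,y) − ⟦f0 x, f0 y⟧ = d_D f2⁰(x,y)
  (∀ x y u, μ00 (G.br0 x y) u - (μ00 x (μ00 y u) - μ00 y (μ00 x u))
      = - W.d (μ2 x y u) + W.br0 (ω x y) u) ∧
  (∀ x y m, μ01 (G.br0 x y) m - (μ01 x (μ01 y m) - μ01 y (μ01 x m))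
      = - μ2 x y (W.d m) + W.br1 (ω x y) m) ∧
  (∀ x y u v, lμ (G.br0 x y) u v
      - (lμ x (μ00 y u) v + lμ x u (μ00 y v) - lμ y (μ00 x u) v - lμ y u (μ00 x v)
          + μ01 x (lμ y u v) - μ01 y (lμ x u v))
      = - (μ2 x y (W.br0 u v) - W.br1 u (μ2 x y v) + W.br1 v (μ2 x y u))
        + W.l3 (ω x y) u v) ∧
  -- (3) f1 l2(x,a) − ⟦f0 x, f1 a⟧ = f2⁰(x, d a) + d_D f2¹(x,a)
  (∀ x a u, μ1 (G.br1 x a) u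
      - (μ01 x (μ1 a u) - μ1 a (μ00 x u) - lμ x (φ a) u)
      = - μ2 x (G.d a) u - W.br1 u (ν x a)) ∧
  (∀ x a, - φ (G.br1 x a) + μ00 x (φ a) = ω x (G.d a) - W.d (ν x a)) ∧
  -- (4) ⟦f1 a, f1 b⟧ = f2¹(a, d b) − f2¹(d a, b)
  (∀ a b, μ1 a (φ b) + μ1 b (φ a) = - ν (G.d b) a - ν (G.d a) b) ∧
  -- (5) f2⁰(l2(x,y),z) + c.p. + f1(l3(x,y,z)) = ⟦f0 x, f2⁰(y,z)⟧ + c.p. + d_D f3(x,y,z)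
  (∀ x y z u,
    - μ2 (G.br0 x y) z u - μ2 (G.br0 y z) x u - μ2 (G.br0 z x) y u
        + μ1 (G.l3 x y z) u
      = (- μ01 x (μ2 y z u) + μ2 y z (μ00 x u) + lμ x (ω y z) u)
        + (- μ01 y (μ2 z x u) + μ2 z x (μ00 y u) + lμ y (ω z x) u)
        + (- μ01 z (μ2 x y u) + μ2 x y (μ00 z u) + lμ z (ω x y) u)
        - W.br1 u (θ x y z)) ∧
  (∀ x y z, ω (G.br0 x y) z + ω (G.br0 y z) x + ω (G.br0 z x) y - φ (G.l3 x y z)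
      = μ00 x (ω y z) + μ00 y (ω z x) + μ00 z (ω x y) - W.d (θ x y z)) ∧
  -- (6) f2¹(l2(x,y),a) + c.p. + f3(x,y,da)
  --       = ⟦f0 x, f2¹(y,a)⟧ + ⟦f0 y, f2¹(a,x)⟧ − ⟦f1 a, f2⁰(x,y)⟧
  (∀ x y a, ν (G.br0 x y) a - ν x (G.br1 y a) + ν y (G.br1 x a) + θ x y (G.d a)
      = μ01 x (ν y a) - μ01 y (ν x a) + μ1 a (ω x y) + μ2 x y (φ a)) ∧
  -- (7) f2¹(x,l3(y,z,t)) + ⟦f0 x, f3(y,z,t)⟧ + c.p.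
  --       = f3(l2(x,y),z,t) + c.p. + (⟦f2⁰(x,y),f2⁰(z,t)⟧ + c.p.)
  (∀ x y z t,
    (ν x (G.l3 y z t) + μ01 x (θ y z t)) + (ν y (G.l3 z t x) + μ01 y (θ z t x))
        + (ν z (G.l3 t x y) + μ01 z (θ t x y)) + (ν t (G.l3 x y z) + μ01 t (θ x y z))
      = θ (G.br0 x y) z t + θ (G.br0 y z) t x + θ (G.br0 z t) x y + θ (G.br0 t x) y z
        + ((μ2 x y (ω z t) + μ2 z t (ω x y)) + (μ2 y z (ω t x) + μ2 t x (ω y z))))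

/-- Equivalence of two morphisms `f` (unprimed) and `f'` (primed) from `G` to
`DER(W)` via the data `(b0, b1, b2)`: the defining conditions written out
componentwise. -/
def EquivCond (W : LieTwo k h0 h1) (G : LieTwo k g0 g1)
    (μ00 : g0 →ₗ[k] h0 →ₗ[k] h0) (μ01 : g0 →ₗ[k] h1 →ₗ[k] h1)
    (lμ : g0 →ₗ[k] h0 →ₗ[k] h0 →ₗ[k] h1)
    (μ1 : g1 →ₗ[k] h0 →ₗ[k] h1) (φ : g1 →ₗ[k] h0)
    (μ2 : g0 →ₗ[k] g0 →ₗ[k] h0 →ₗ[k] h1)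
    (ω : g0 →ₗ[k] g0 →ₗ[k] h0) (ν : g0 →ₗ[k] g1 →ₗ[k] h1)
    (θ : g0 →ₗ[k] g0 →ₗ[k] g0 →ₗ[k] h1)
    (μ00' : g0 →ₗ[k] h0 →ₗ[k] h0) (μ01' : g0 →ₗ[k] h1 →ₗ[k] h1)
    (lμ' : g0 →ₗ[k] h0 →ₗ[k] h0 →ₗ[k] h1)
    (μ1' : g1 →ₗ[k] h0 →ₗ[k] h1) (φ' : g1 →ₗ[k] h0)
    (μ2' : g0 →ₗ[k] g0 →ₗ[k] h0 →ₗ[k] h1)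
    (ω' : g0 →ₗ[k] g0 →ₗ[k] h0) (ν' : g0 →ₗ[k] g1 →ₗ[k] h1)
    (θ' : g0 →ₗ[k] g0 →ₗ[k] g0 →ₗ[k] h1)
    (b0 : g0 →ₗ[k] h0) (b1 : g1 →ₗ[k] h1) (b2 : g0 →ₗ[k] g0 →ₗ[k] h1) : Prop :=
  -- f0 − f0' = d_D ∘ b0
  (∀ x u, μ00 x u - μ00' x u = W.br0 (b0 x) u) ∧
  (∀ x m, μ01 x m - μ01' x m = W.br1 (b0 x) m) ∧
  (∀ x u v, lμ x u v - lμ' x u v = W.l3 (b0 x) u v) ∧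
  -- f1 − f1' = b0 ∘ d + d_D ∘ b1
  (∀ a u, μ1 a u - μ1' a u = - W.br1 u (b1 a)) ∧
  (∀ a, - φ a + φ' a = b0 (G.d a) - W.d (b1 a)) ∧
  -- (f2⁰' − f2⁰)(x,y) = ⟦f0' x, b0 y⟧ − ⟦f0' y, b0 x⟧ − b0 [x,y]
  --                      + ⟦d_D b0 x, b0 y⟧ − d_D b2(x,y)
  (∀ x y u, - μ2' x y u + μ2 x y u
      = lμ' x (b0 y) u - lμ' y (b0 x) u + W.l3 (b0 x) (b0 y) u + W.br1 u (b2 x y)) ∧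
  (∀ x y, ω' x y - ω x y
      = μ00' x (b0 y) - μ00' y (b0 x) - b0 (G.br0 x y) + W.br0 (b0 x) (b0 y)
        + W.d (b2 x y)) ∧
  -- (f2¹' − f2¹)(x,a) = ⟦f0' x, b1 a⟧ + ⟦f1' a, b0 x⟧ − b1 [x,a]
  --                      + ⟦d_D b0 x, b1 a⟧ + b2(x, d a)
  (∀ x a, ν' x a - ν x a
      = μ01' x (b1 a) - μ1' a (b0 x) - b1 (G.br1 x a) + W.br1 (b0 x) (b1 a)
        + b2 x (G.d a)) ∧
  -- (f3' − f3)(x,y,z) = ⟦f0' x, b2(y,z)⟧ − b2([x,y],z) + c.p.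
  --    + ⟦f2⁰'(x,y), b0 z⟧ + ⟦d_D b0 x, b2(y,z)⟧ + l_{f0' x}(b0 y, b0 z) + c.p.
  --    − b1 l3(x,y,z) + l3ʰ(b0 x, b0 y, b0 z)
  (∀ x y z, θ' x y z - θ x y z
      = (μ01' x (b2 y z) - b2 (G.br0 x y) z + μ2' x y (b0 z)
          + W.br1 (b0 x) (b2 y z) + lμ' x (b0 y) (b0 z))
        + (μ01' y (b2 z x) - b2 (G.br0 y z) x + μ2' y z (b0 x)
            + W.br1 (b0 y) (b2 z x) + lμ' y (b0 z) (b0 x))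
        + (μ01' z (b2 x y) - b2 (G.br0 z x) y + μ2' z x (b0 y)
            + W.br1 (b0 z) (b2 x y) + lμ' z (b0 x) (b0 y))
        - b1 (G.l3 x y z) + W.l3 (b0 x) (b0 y) (b0 z))

end Defs

/-- The data induced on `h` (identified with `ker p ⊆ ĝ` via the injection `i`)
by a splitting `(σ0, σ1)` of a non-abelian extension `h → ĝ → g`:
the maps `φ, μ0 = (μ00, μ01), μ1, μ2, l_{μ0(·)} = lμ, ω, ν, θ`,
characterized by their images under `i`. -/
structure SplitData {k h0 h1 g0 g1 e0 e1 : Type*} [Field k]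
    [AddCommGroup h0] [Module k h0] [AddCommGroup h1] [Module k h1]
    [AddCommGroup g0] [Module k g0] [AddCommGroup g1] [Module k g1]
    [AddCommGroup e0] [Module k e0] [AddCommGroup e1] [Module k e1]
    (W : LieTwo k h0 h1) (G : LieTwo k g0 g1) (E : LieTwo k e0 e1)
    (i : StrictMor W E) (σ0 : g0 →ₗ[k] e0) (σ1 : g1 →ₗ[k] e1) where
  φ : g1 →ₗ[k] h0
  μ00 : g0 →ₗ[k] h0 →ₗ[k] h0
  μ01 : g0 →ₗ[k] h1 →ₗ[k] h1
  μ1 : g1 →ₗ[k] h0 →ₗ[k] h1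
  μ2 : g0 →ₗ[k] g0 →ₗ[k] h0 →ₗ[k] h1
  lμ : g0 →ₗ[k] h0 →ₗ[k] h0 →ₗ[k] h1
  ω : g0 →ₗ[k] g0 →ₗ[k] h0
  ν : g0 →ₗ[k] g1 →ₗ[k] h1
  θ : g0 →ₗ[k] g0 →ₗ[k] g0 →ₗ[k] h1
  hφ : ∀ a, i.m0 (φ a) = E.d (σ1 a) - σ0 (G.d a)
  hμ00 : ∀ x u, i.m0 (μ00 x u) = E.br0 (σ0 x) (i.m0 u)
  hμ01 : ∀ x m, i.m1 (μ01 x m) = E.br1 (σ0 x) (i.m1 m)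
  hμ1 : ∀ a u, i.m1 (μ1 a u) = - E.br1 (i.m0 u) (σ1 a)
  hμ2 : ∀ x y u, i.m1 (μ2 x y u) = E.l3 (σ0 x) (σ0 y) (i.m0 u)
  hlμ : ∀ x u v, i.m1 (lμ x u v) = E.l3 (σ0 x) (i.m0 u) (i.m0 v)
  hω : ∀ x y, i.m0 (ω x y) = σ0 (G.br0 x y) - E.br0 (σ0 x) (σ0 y)
  hν : ∀ x a, i.m1 (ν x a) = σ1 (G.br1 x a) - E.br1 (σ0 x) (σ1 a)
  hθ : ∀ x y z, i.m1 (θ x y z) = σ1 (G.l3 x y z) - E.l3 (σ0 x) (σ0 y) (σ0 z)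

/-- Two splittings `σ, σ'` of a non-abelian extension of Lie 2-algebras give
equivalent morphisms from `g` to `DER(h)`, with equivalence data
`(b0, b1, b2 = 0)` where `b0 = σ0 − σ0'` and `b1 = σ1 − σ1'`. -/
theorem stmt15 {k h0 h1 g0 g1 e0 e1 : Type*} [Field k]
    [AddCommGroup h0] [Module k h0] [AddCommGroup h1] [Module k h1]
    [AddCommGroup g0] [Module k g0] [AddCommGroup g1] [Module k g1]
    [AddCommGroup e0] [Module k e0] [AddCommGroup e1] [Module k e1]
    (W : LieTwo k h0 h1) (G : LieTwo k g0 g1) (E : LieTwo k e0 e1)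
    (i : StrictMor W E) (p : StrictMor E G)
    (hinj0 : Function.Injective i.m0) (hinj1 : Function.Injective i.m1)
    (hsurj0 : Function.Surjective p.m0) (hsurj1 : Function.Surjective p.m1)
    (hex0 : LinearMap.range i.m0 = LinearMap.ker p.m0)
    (hex1 : LinearMap.range i.m1 = LinearMap.ker p.m1)
    (σ0 : g0 →ₗ[k] e0) (σ1 : g1 →ₗ[k] e1)
    (hσ0 : ∀ x, p.m0 (σ0 x) = x) (hσ1 : ∀ a, p.m1 (σ1 a) = a)
    (S : SplitData W G E i σ0 σ1)
    (σ0' : g0 →ₗ[k] e0) (σ1' : g1 →ₗ[k] e1)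
    (hσ0' : ∀ x, p.m0 (σ0' x) = x) (hσ1' : ∀ a, p.m1 (σ1' a) = a)
    (S' : SplitData W G E i σ0' σ1')
    (b0 : g0 →ₗ[k] h0) (b1 : g1 →ₗ[k] h1)
    (hb0 : ∀ x, i.m0 (b0 x) = σ0 x - σ0' x)
    (hb1 : ∀ a, i.m1 (b1 a) = σ1 a - σ1' a) :
    -- f and f' are equivalent via (b0, b1, b2 = 0)
    EquivCond W G S.μ00 S.μ01 S.lμ S.μ1 S.φ S.μ2 S.ω S.ν S.θ
      S'.μ00 S'.μ01 S'.lμ S'.μ1 S'.φ S'.μ2 S'.ω S'.ν S'.θ b0 b1 0 ∧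
    -- in particular, the explicit formulas:
    -- μ0(x) − μ0'(x) = ad_{b0 x}
    (∀ x u, S.μ00 x u - S'.μ00 x u = W.br0 (b0 x) u) ∧
    (∀ x m, S.μ01 x m - S'.μ01 x m = W.br1 (b0 x) m) ∧
    -- φ'(a) − φ(a) = b0(d a) − d_h b1(a)
    (∀ a, S'.φ a - S.φ a = b0 (G.d a) - W.d (b1 a)) ∧
    -- μ1(a) − μ1'(a) = ad_{b1 a}
    (∀ a u, S.μ1 a u - S'.μ1 a u = - W.br1 u (b1 a)) ∧
    -- (μ2 − μ2')(x,y) = l_{μ0'(x)}(b0 y, ·) − l_{μ0'(y)}(b0 x, ·) + l3ʰ(b0 x, b0 y, ·)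
    (∀ x y u, S.μ2 x y u - S'.μ2 x y u
        = S'.lμ x (b0 y) u - S'.lμ y (b0 x) u + W.l3 (b0 x) (b0 y) u) ∧
    -- (ω' − ω)(x,y) = μ0'(x) b0(y) − μ0'(y) b0(x) + [b0 x, b0 y]ʰ − b0([x,y])
    (∀ x y, S'.ω x y - S.ω x y
        = S'.μ00 x (b0 y) - S'.μ00 y (b0 x) + W.br0 (b0 x) (b0 y)
          - b0 (G.br0 x y)) ∧
    -- (ν' − ν)(x,a) = μ0'(x)(b1 a) − μ1'(a)(b0 x) − b1([x,a]) + [b0 x, b1 a]ʰ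
    (∀ x a, S'.ν x a - S.ν x a
        = S'.μ01 x (b1 a) - S'.μ1 a (b0 x) - b1 (G.br1 x a)
          + W.br1 (b0 x) (b1 a)) ∧
    -- (θ' − θ)(x,y,z) = μ2'(x,y) b0(z) + l_{μ0'(x)}(b0 y, b0 z) + c.p.
    --                    − b1(l3(x,y,z)) + l3ʰ(b0 x, b0 y, b0 z)
    (∀ x y z, S'.θ x y z - S.θ x y z
        = (S'.μ2 x y (b0 z) + S'.lμ x (b0 y) (b0 z))
          + (S'.μ2 y z (b0 x) + S'.lμ y (b0 z) (b0 x))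
          + (S'.μ2 z x (b0 y) + S'.lμ z (b0 x) (b0 y))
          - b1 (G.l3 x y z) + W.l3 (b0 x) (b0 y) (b0 z)) := by
  have hs0 : ∀ x, σ0 x = σ0' x + i.m0 (b0 x) := fun x => by rw [hb0]; abel
  have hs1 : ∀ a, σ1 a = σ1' a + i.m1 (b1 a) := fun a => by rw [hb1]; abel
  have cyc : ∀ a b c, E.l3 a b c = E.l3 b c a := fun a b c => by
    rw [E.l3_skew12 a b c, E.l3_skew23 b a c, neg_neg]
  have cyc' : ∀ a b c, E.l3 a b c = E.l3 c a b := fun a b c => by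
    rw [cyc, cyc]
  have Hμ00 : ∀ x u, S.μ00 x u - S'.μ00 x u = W.br0 (b0 x) u := by
    intro x u; apply hinj0
    simp only [map_sub, S.hμ00, S'.hμ00, i.map_br0, hs0, map_add,
      LinearMap.add_apply]
    abel
  have Hμ01 : ∀ x m, S.μ01 x m - S'.μ01 x m = W.br1 (b0 x) m := by
    intro x m; apply hinj1
    simp only [map_sub, S.hμ01, S'.hμ01, i.map_br1, hs0, map_add,
      LinearMap.add_apply]
    abel
  have Hlμ : ∀ x u v, S.lμ x u v - S'.lμ x u v = W.l3 (b0 x) u v := by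
    intro x u v; apply hinj1
    simp only [map_sub, S.hlμ, S'.hlμ, i.map_l3, hs0, map_add,
      LinearMap.add_apply]
    abel
  have Hμ1 : ∀ a u, S.μ1 a u - S'.μ1 a u = - W.br1 u (b1 a) := by
    intro a u; apply hinj1
    simp only [map_sub, map_neg, S.hμ1, S'.hμ1, i.map_br1, hs1, map_add,
      LinearMap.add_apply]
    abel
  have Hφ : ∀ a, S'.φ a - S.φ a = b0 (G.d a) - W.d (b1 a) := by
    intro a; apply hinj0
    simp only [map_sub, S.hφ, S'.hφ, i.comm_d, hs0, hs1, map_add,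
      LinearMap.add_apply]
    abel
  have Hμ2 : ∀ x y u, S.μ2 x y u - S'.μ2 x y u
      = S'.lμ x (b0 y) u - S'.lμ y (b0 x) u + W.l3 (b0 x) (b0 y) u := by
    intro x y u; apply hinj1
    simp only [map_sub, map_add, S.hμ2, S'.hμ2, S'.hlμ, i.map_l3, hs0,
      LinearMap.add_apply]
    rw [E.l3_skew12 (i.m0 (b0 x)) (σ0' y) (i.m0 u)]
    abel
  have Hω : ∀ x y, S'.ω x y - S.ω x y
      = S'.μ00 x (b0 y) - S'.μ00 y (b0 x) + W.br0 (b0 x) (b0 y)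
        - b0 (G.br0 x y) := by
    intro x y; apply hinj0
    simp only [map_sub, map_add, S.hω, S'.hω, S'.hμ00, i.map_br0, hs0,
      LinearMap.add_apply]
    rw [E.br0_skew (i.m0 (b0 x)) (σ0' y)]
    abel
  have Hν : ∀ x a, S'.ν x a - S.ν x a
      = S'.μ01 x (b1 a) - S'.μ1 a (b0 x) - b1 (G.br1 x a)
        + W.br1 (b0 x) (b1 a) := by
    intro x a; apply hinj1
    simp only [map_sub, map_add, map_neg, S.hν, S'.hν, S'.hμ01, S'.hμ1,
      i.map_br1, hs0, hs1, LinearMap.add_apply]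
    abel
  have Hθ : ∀ x y z, S'.θ x y z - S.θ x y z
      = (S'.μ2 x y (b0 z) + S'.lμ x (b0 y) (b0 z))
        + (S'.μ2 y z (b0 x) + S'.lμ y (b0 z) (b0 x))
        + (S'.μ2 z x (b0 y) + S'.lμ z (b0 x) (b0 y))
        - b1 (G.l3 x y z) + W.l3 (b0 x) (b0 y) (b0 z) := by
    intro x y z; apply hinj1
    simp only [map_sub, map_add, S.hθ, S'.hθ, S'.hμ2, S'.hlμ, i.map_l3, hs0,
      hs1, LinearMap.add_apply]
    rw [cyc' (σ0' x) (i.m0 (b0 y)) (σ0' z),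
      cyc (i.m0 (b0 x)) (σ0' y) (σ0' z),
      cyc (i.m0 (b0 x)) (σ0' y) (i.m0 (b0 z)),
      cyc' (i.m0 (b0 x)) (i.m0 (b0 y)) (σ0' z)]
    abel
  refine ⟨⟨Hμ00, Hμ01, Hlμ, Hμ1, ?_, ?_, ?_, ?_, ?_⟩,
    Hμ00, Hμ01, Hφ, Hμ1, Hμ2, Hω, Hν, Hθ⟩
  · intro a; rw [neg_add_eq_sub, Hφ]
  · intro x y u
    simp only [LinearMap.zero_apply, map_zero, add_zero]
    rw [neg_add_eq_sub, Hμ2]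
  · intro x y
    simp only [LinearMap.zero_apply, map_zero, add_zero]
    rw [Hω]; abel
  · intro x a
    simp only [LinearMap.zero_apply, add_zero]
    rw [Hν]
  · intro x y z
    simp only [LinearMap.zero_apply, map_zero, sub_zero, zero_sub, add_zero,
      zero_add, neg_zero]
    rw [Hθ]
end

section
/- Let g and h be Lie 2-algebras over a field k, ĝ an extension of g by h, and σ a splitting, with induced maps φ, μ₀, ω, ν. Then for all x ∈ g₀ and a ∈ g₁: μ₀(x)(φ(a)) − φ([x,a]_g) = ω(x, d_g a) − d_h ν(x,a). -/
/-- `μ0(x)(φ(a)) − φ([x,a]) = ω(x, d a) − d_h ν(x,a)` for the data induced by a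
splitting of a non-abelian extension of Lie 2-algebras. -/
theorem stmt16 {k h0 h1 g0 g1 e0 e1 : Type*} [Field k]
    [AddCommGroup h0] [Module k h0] [AddCommGroup h1] [Module k h1]
    [AddCommGroup g0] [Module k g0] [AddCommGroup g1] [Module k g1]
    [AddCommGroup e0] [Module k e0] [AddCommGroup e1] [Module k e1]
    (W : LieTwo k h0 h1) (G : LieTwo k g0 g1) (E : LieTwo k e0 e1)
    (i : StrictMor W E) (p : StrictMor E G)
    (hinj0 : Function.Injective i.m0) (hinj1 : Function.Injective i.m1)
    (hsurj0 : Function.Surjective p.m0) (hsurj1 : Function.Surjective p.m1)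
    (hex0 : LinearMap.range i.m0 = LinearMap.ker p.m0)
    (hex1 : LinearMap.range i.m1 = LinearMap.ker p.m1)
    (σ0 : g0 →ₗ[k] e0) (σ1 : g1 →ₗ[k] e1)
    (hσ0 : ∀ x, p.m0 (σ0 x) = x) (hσ1 : ∀ a, p.m1 (σ1 a) = a)
    (S : SplitData W G E i σ0 σ1) :
    ∀ (x : g0) (a : g1),
      S.μ00 x (S.φ a) - S.φ (G.br1 x a) = S.ω x (G.d a) - W.d (S.ν x a) := by
  intro x a
  apply hinj0
  simp only [map_sub, S.hμ00, S.hφ, S.hω, i.comm_d, map_sub, S.hν,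
    E.d_br1, G.d_br1]
  abel
end

section
/- Let g and h be Lie 2-algebras over a field k, ĝ an extension of g by h, and σ a splitting, with induced maps φ, μ₀, ω, θ. Then for all x, y, z ∈ g₀: −μ₀(x)(ω(y,z)) − ω(x,[y,z]_g) − μ₀(y)(ω(z,x)) − ω(y,[z,x]_g) − μ₀(z)(ω(x,y)) − ω(z,[x,y]_g) = −d_h θ(x,y,z) + φ(l₃^g(x,y,z)). -/
/-- `−μ0(x)ω(y,z) − ω(x,[y,z]) + c.p. = −d_h θ(x,y,z) + φ(l3(x,y,z))` for the
data induced by a splitting of a non-abelian extension of Lie 2-algebras. -/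
theorem stmt17 {k h0 h1 g0 g1 e0 e1 : Type*} [Field k]
    [AddCommGroup h0] [Module k h0] [AddCommGroup h1] [Module k h1]
    [AddCommGroup g0] [Module k g0] [AddCommGroup g1] [Module k g1]
    [AddCommGroup e0] [Module k e0] [AddCommGroup e1] [Module k e1]
    (W : LieTwo k h0 h1) (G : LieTwo k g0 g1) (E : LieTwo k e0 e1)
    (i : StrictMor W E) (p : StrictMor E G)
    (hinj0 : Function.Injective i.m0) (hinj1 : Function.Injective i.m1)
    (hsurj0 : Function.Surjective p.m0) (hsurj1 : Function.Surjective p.m1)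
    (hex0 : LinearMap.range i.m0 = LinearMap.ker p.m0)
    (hex1 : LinearMap.range i.m1 = LinearMap.ker p.m1)
    (σ0 : g0 →ₗ[k] e0) (σ1 : g1 →ₗ[k] e1)
    (hσ0 : ∀ x, p.m0 (σ0 x) = x) (hσ1 : ∀ a, p.m1 (σ1 a) = a)
    (S : SplitData W G E i σ0 σ1) :
    ∀ x y z : g0,
      - S.μ00 x (S.ω y z) - S.ω x (G.br0 y z)
        - S.μ00 y (S.ω z x) - S.ω y (G.br0 z x)
        - S.μ00 z (S.ω x y) - S.ω z (G.br0 x y)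
      = - W.d (S.θ x y z) + S.φ (G.l3 x y z) := by
  intro x y z
  apply hinj0
  have jE := E.jac0 (σ0 x) (σ0 y) (σ0 z)
  have jG := congrArg σ0 (G.jac0 x y z)
  simp only [map_add] at jG
  simp only [map_add, map_sub, map_neg, S.hμ00, S.hω, S.hφ, i.comm_d, S.hθ]
  rw [← jE, ← jG]
  abel
end
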